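/- Let X be a nondegenerate random variable in ℝ^d and X_1, X_2 i.i.d. copies of X. Then there exists s_0 > 0 such that inf_{ω ∈ S^{d−1}} E[ ⟨ω, X_1 − X_2⟩² · 1{ max(|X_1|,|X_2|) ≤ s_0/(2√d) } ] > 0. -/

import Mathlib

open MeasureTheory ProbabilityTheory Filter Set Real

noncomputable section

/-- Euclidean space ℝ^d. -/
abbrev E (d : ℕ) := EuclideanSpace ℝ (Fin d)

/-- A measure on ℝ^d is nondegenerate if it is not concentrated on any affine subspace of
dimension `d - 1`, equivalently it gives mass `< 1` to every affine hyperplane. -/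
def IsNondegenerate {d : ℕ} (μ : Measure (E d)) : Prop :=
  ∀ v : E d, v ≠ 0 → ∀ c : ℝ, μ {x | (inner ℝ v x : ℝ) = c} ≠ 1

/-!
Write `G_R(ω) = E[⟨ω, X₁ - X₂⟩² ; max(|X₁|, |X₂|) ≤ R]`. If `G_R(ω) = 0` for every `R`, then
`⟨ω, X₁⟩ = ⟨ω, X₂⟩` almost surely; by independence, Fubini then puts all the mass of
`⟨ω, X₁⟩` on one value, so the law of `X₁` sits on a hyperplane. Hence for each unit `ω` some
`G_R(ω)` is positive. Each `G_R` is continuous and `G_R` increases with `R`, so the open sets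
`{G_R > 0}` form a directed cover of the compact unit sphere: a single `R` works for the whole
sphere, and there the continuous positive function `G_R` is bounded below by some `c > 0`.
-/

open scoped InnerProductSpace

lemma exists_measure_prodMk_preimage_eq_one {α β : Type*} [MeasurableSpace α]
    [MeasurableSpace β] {μ : Measure α} {ν : Measure β} [IsProbabilityMeasure μ]
    [IsProbabilityMeasure ν] {s : Set (α × β)} (hs : MeasurableSet s)
    (h : μ.prod ν s = 1) : ∃ x, ν (Prod.mk x ⁻¹' s) = 1 := by
  rw [Measure.prod_apply hs] at h
  have hae : (fun x => ν (Prod.mk x ⁻¹' s)) =ᵐ[μ] 1 :=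
    ae_eq_of_ae_le_of_lintegral_le (ae_of_all _ fun _ => prob_le_one) (by simp [h])
      aemeasurable_const (by simp [h])
  exact hae.exists

lemma ProbabilityTheory.IndepFun.exists_map_preimage_eq_one_of_ae_comp_eq {Ω α : Type*}
    [MeasurableSpace Ω] [MeasurableSpace α] {μ : Measure Ω} [IsProbabilityMeasure μ]
    {X₁ X₂ : Ω → α} (hindep : IndepFun X₁ X₂ μ) (h₁ : Measurable X₁) (h₂ : Measurable X₂)
    {φ : α → ℝ} (hφ : Measurable φ) (h : ∀ᵐ x ∂μ, φ (X₁ x) = φ (X₂ x)) :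
    ∃ c, μ.map X₂ {y | φ y = c} = 1 := by
  have := Measure.isProbabilityMeasure_map (μ := μ) h₁.aemeasurable
  have := Measure.isProbabilityMeasure_map (μ := μ) h₂.aemeasurable
  have hS : MeasurableSet {p : α × α | φ p.1 = φ p.2} :=
    measurableSet_eq_fun (hφ.comp measurable_fst) (hφ.comp measurable_snd)
  have hprod : (μ.map X₁).prod (μ.map X₂) {p | φ p.1 = φ p.2} = 1 := by
    rw [← (indepFun_iff_map_prod_eq_prod_map_map h₁.aemeasurable h₂.aemeasurable).1 hindep,
      Measure.map_apply (h₁.prodMk h₂) hS]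
    exact (mem_ae_iff_prob_eq_one (measurableSet_eq_fun (hφ.comp h₁) (hφ.comp h₂))).1 h
  obtain ⟨x, hx⟩ := exists_measure_prodMk_preimage_eq_one hS hprod
  refine ⟨φ x, ?_⟩
  convert hx using 2
  ext y
  exact eq_comm

lemma abs_inner_sub_le_of_max_norm_le {F : Type*} [NormedAddCommGroup F] [InnerProductSpace ℝ F]
    {x₁ x₂ : F} {R : ℝ} (h : max ‖x₁‖ ‖x₂‖ ≤ R) (ω : F) :
    |⟪ω, x₁ - x₂⟫_ℝ| ≤ ‖ω‖ * (2 * R) := by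
  have hsub : ‖x₁ - x₂‖ ≤ 2 * R := by
    linarith [norm_sub_le x₁ x₂, le_of_max_le_left h, le_of_max_le_right h]
  exact (abs_real_inner_le_norm ω _).trans (mul_le_mul_of_nonneg_left hsub (norm_nonneg ω))

lemma measurableSet_max_norm_le {Ω F : Type*} [MeasurableSpace Ω] [NormedAddCommGroup F]
    [MeasurableSpace F] [OpensMeasurableSpace F] {X₁ X₂ : Ω → F} (h₁ : Measurable X₁)
    (h₂ : Measurable X₂) (R : ℝ) : MeasurableSet {x | max ‖X₁ x‖ ‖X₂ x‖ ≤ R} :=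
  measurableSet_le (h₁.norm.max h₂.norm) measurable_const

section TruncatedSecondMoment

variable {Ω F : Type*} [MeasurableSpace Ω] {μ : Measure Ω} [NormedAddCommGroup F]
  [InnerProductSpace ℝ F] [MeasurableSpace F] [BorelSpace F] [SecondCountableTopology F]
  {X₁ X₂ : Ω → F}

def truncatedSecondMoment (μ : Measure Ω) (X₁ X₂ : Ω → F) (R : ℝ) (ω : F) : ℝ :=
  ∫ x in {x | max ‖X₁ x‖ ‖X₂ x‖ ≤ R}, ⟪ω, X₁ x - X₂ x⟫_ℝ ^ 2 ∂μ

lemma integrableOn_inner_sub_sq [IsFiniteMeasure μ] (h₁ : Measurable X₁) (h₂ : Measurable X₂)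
    (R : ℝ) (ω : F) :
    IntegrableOn (fun x => ⟪ω, X₁ x - X₂ x⟫_ℝ ^ 2) {x | max ‖X₁ x‖ ‖X₂ x‖ ≤ R} μ := by
  refine Integrable.mono' (integrable_const ((‖ω‖ * (2 * R)) ^ 2))
    ((h₁.sub h₂).const_inner.pow_const 2).aestronglyMeasurable ?_
  filter_upwards [ae_restrict_mem (measurableSet_max_norm_le h₁ h₂ R)] with x hx
  rw [Real.norm_eq_abs, abs_pow]
  exact pow_le_pow_left₀ (abs_nonneg _) (abs_inner_sub_le_of_max_norm_le hx ω) 2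

lemma truncatedSecondMoment_mono [IsFiniteMeasure μ] (h₁ : Measurable X₁) (h₂ : Measurable X₂)
    (ω : F) : Monotone fun R => truncatedSecondMoment μ X₁ X₂ R ω :=
  fun _ R' hRR' => setIntegral_mono_set (integrableOn_inner_sub_sq h₁ h₂ R' ω)
    (ae_of_all _ fun _ => sq_nonneg _) (ae_of_all _ fun _ hx => le_trans hx hRR')

lemma continuous_truncatedSecondMoment [IsFiniteMeasure μ] (h₁ : Measurable X₁)
    (h₂ : Measurable X₂) (R : ℝ) : Continuous (truncatedSecondMoment μ X₁ X₂ R) := by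
  refine continuous_iff_continuousAt.2 fun ω₀ => continuousAt_of_dominated
    (bound := fun _ => ((‖ω₀‖ + 1) * (2 * R)) ^ 2)
    (Eventually.of_forall fun ω => ((h₁.sub h₂).const_inner.pow_const 2).aestronglyMeasurable)
    ?_ (integrable_const _) (ae_of_all _ fun x => by fun_prop)
  filter_upwards [Metric.ball_mem_nhds ω₀ one_pos] with ω hω
  filter_upwards [ae_restrict_mem (measurableSet_max_norm_le h₁ h₂ R)] with x hx
  have hω' : ‖ω‖ ≤ ‖ω₀‖ + 1 := by
    linarith [norm_le_norm_add_norm_sub' ω ω₀, (mem_ball_iff_norm.1 hω).le]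
  have hR : 0 ≤ 2 * R := by linarith [(norm_nonneg _).trans (le_max_left _ _ |>.trans hx)]
  rw [Real.norm_eq_abs, abs_pow]
  exact pow_le_pow_left₀ (abs_nonneg _) ((abs_inner_sub_le_of_max_norm_le hx ω).trans
    (mul_le_mul_of_nonneg_right hω' hR)) 2

lemma exists_truncatedSecondMoment_pos [IsFiniteMeasure μ] (h₁ : Measurable X₁)
    (h₂ : Measurable X₂) (ω : F) (h : ¬ ∀ᵐ x ∂μ, ⟪ω, X₁ x⟫_ℝ = ⟪ω, X₂ x⟫_ℝ) :
    ∃ n : ℕ, 0 < truncatedSecondMoment μ X₁ X₂ n ω := by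
  by_contra! hzero
  have hnull (n : ℕ) : μ ((Function.support fun x => ⟪ω, X₁ x - X₂ x⟫_ℝ ^ 2) ∩
      {x | max ‖X₁ x‖ ‖X₂ x‖ ≤ n}) = 0 := by
    have := (setIntegral_pos_iff_support_of_nonneg_ae (ae_of_all _ fun _ => sq_nonneg _)
      (integrableOn_inner_sub_sq h₁ h₂ n ω)).not.1 (hzero n).not_gt
    rwa [not_lt, nonpos_iff_eq_zero] at this
  refine h (ae_iff.2 (measure_mono_null (fun x hx => ?_) (measure_iUnion_null hnull)))
  refine mem_iUnion.2 ⟨⌈max ‖X₁ x‖ ‖X₂ x‖⌉₊, ?_, Nat.le_ceil (max ‖X₁ x‖ ‖X₂ x‖)⟩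
  simpa [inner_sub_right, sub_eq_zero] using hx

lemma exists_pos_le_truncatedSecondMoment [IsFiniteMeasure μ] (h₁ : Measurable X₁)
    (h₂ : Measurable X₂) {K : Set F} (hK : IsCompact K)
    (hpos : ∀ ω ∈ K, ∃ n : ℕ, 0 < truncatedSecondMoment μ X₁ X₂ n ω) :
    ∃ n : ℕ, ∃ c > 0, ∀ ω ∈ K, c ≤ truncatedSecondMoment μ X₁ X₂ n ω := by
  obtain ⟨n, hn⟩ := hK.elim_directed_cover
    (fun n : ℕ => {ω | 0 < truncatedSecondMoment μ X₁ X₂ n ω})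
    (fun n => isOpen_lt continuous_const (continuous_truncatedSecondMoment h₁ h₂ n))
    (fun ω hω => mem_iUnion.2 (hpos ω hω))
    (Monotone.directed_le fun m n hmn ω hω =>
      hω.trans_le (truncatedSecondMoment_mono h₁ h₂ ω (Nat.cast_le.2 hmn)))
  obtain ⟨c, hc, hle⟩ :=
    hK.exists_forall_le' (continuous_truncatedSecondMoment h₁ h₂ n).continuousOn hn
  exact ⟨n, c, hc, hle⟩

end TruncatedSecondMoment

lemma IsNondegenerate.not_ae_inner_eq {d : ℕ} {Ω : Type*} [MeasurableSpace Ω] {μ : Measure Ω}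
    [IsProbabilityMeasure μ] {X₁ X₂ : Ω → E d} (hnd : IsNondegenerate (μ.map X₁))
    (h₁ : Measurable X₁) (h₂ : Measurable X₂) (hindep : IndepFun X₁ X₂ μ) {ω : E d}
    (hω : ω ≠ 0) : ¬ ∀ᵐ x ∂μ, ⟪ω, X₁ x⟫_ℝ = ⟪ω, X₂ x⟫_ℝ := fun h =>
  have ⟨c, hc⟩ := hindep.symm.exists_map_preimage_eq_one_of_ae_comp_eq h₂ h₁
    (measurable_const.inner measurable_id) (h.mono fun _ => Eq.symm)
  hnd ω hω c hc

theorem nondegenerate_truncated_second_moment_general {d : ℕ} {Ω : Type} [MeasureSpace Ω]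
    [IsProbabilityMeasure (ℙ : Measure Ω)]
    (X₁ X₂ : Ω → E d) (h₁ : Measurable X₁) (h₂ : Measurable X₂)
    (hindep : IndepFun X₁ X₂ ℙ)
    (hnd : IsNondegenerate (Measure.map X₁ ℙ)) :
    ∃ s₀ > (0:ℝ), ∃ c > (0:ℝ), ∀ ω : E d, ‖ω‖ = 1 →
      c ≤ ∫ ω' in {ω' | max ‖X₁ ω'‖ ‖X₂ ω'‖ ≤ s₀ / (2 * Real.sqrt d)},
            ((inner ℝ ω (X₁ ω' - X₂ ω') : ℝ)) ^ 2 := by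
  rcases Nat.eq_zero_or_pos d with rfl | hd
  · exact ⟨1, one_pos, 1, one_pos, fun ω hω => by simp [Subsingleton.elim ω 0] at hω⟩
  obtain ⟨n, c, hc, hle⟩ := exists_pos_le_truncatedSecondMoment h₁ h₂
    (isCompact_sphere (0 : E d) 1) fun ω hω => exists_truncatedSecondMoment_pos h₁ h₂ ω
      (hnd.not_ae_inner_eq h₁ h₂ hindep (ne_zero_of_mem_unit_sphere ⟨ω, hω⟩))
  have hsqrt : 0 < 2 * √(d : ℝ) := by positivity
  refine ⟨2 * √(d : ℝ) * (n + 1), by positivity, c, hc, fun ω hω => ?_⟩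
  rw [mul_div_cancel_left₀ _ hsqrt.ne']
  exact (hle ω (by simpa using hω)).trans
    (truncatedSecondMoment_mono h₁ h₂ ω (by linarith : (n : ℝ) ≤ n + 1))

/-- **Lemma 4.3**: let `X` be a nondegenerate random variable in ℝ^d and `X₁, X₂` i.i.d.
copies of `X`.  Then there is `s₀ > 0` with
`inf_{ω ∈ S^{d-1}} E[⟨ω, X₁ - X₂⟩² 1{max(|X₁|,|X₂|) ≤ s₀/(2√d)}] > 0`. -/
theorem nondegenerate_truncated_second_moment {d : ℕ} {Ω : Type} [MeasureSpace Ω]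
    [IsProbabilityMeasure (ℙ : Measure Ω)]
    (X₁ X₂ : Ω → E d) (h₁ : Measurable X₁) (h₂ : Measurable X₂)
    (hindep : IndepFun X₁ X₂ ℙ)
    (hident : Measure.map X₁ ℙ = Measure.map X₂ ℙ)
    (hnd : IsNondegenerate (Measure.map X₁ ℙ)) :
    ∃ s₀ > (0:ℝ), ∃ c > (0:ℝ), ∀ ω : E d, ‖ω‖ = 1 →
      c ≤ ∫ ω' in {ω' | max ‖X₁ ω'‖ ‖X₂ ω'‖ ≤ s₀ / (2 * Real.sqrt d)},
            ((inner ℝ ω (X₁ ω' - X₂ ω') : ℝ)) ^ 2 :=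
  nondegenerate_truncated_second_moment_general X₁ X₂ h₁ h₂ hindep hnd
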